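/- Let ε > 0, let G = (V, E) be a finite simple graph with adjacency matrix A, let P be a partition of V, let I and J be classes of P, and let X ⊆ I and Y ⊆ J be nonempty sets with |X| > ε·|I|, |Y| > ε·|J|, and |d(X, Y) − d(I, J)| > ε. Let Q be a refinement of P such that both X and Y are unions of classes of Q. Then ‖(A_Q − A_P)_{X,Y}‖² > ε⁴·|I|·|J|, where ‖·‖ is the Frobenius norm. -/

import Mathlib

open Finset

/-- `P` is a partition of the finite type `V`. -/
def IsPartition {V : Type*} [Fintype V] [DecidableEq V] (P : Finset (Finset V)) : Prop :=
  (∀ I ∈ P, I.Nonempty) ∧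
  (∀ I ∈ P, ∀ J ∈ P, I ≠ J → Disjoint I J) ∧
  P.sup id = Finset.univ

/-- `Q` is a refinement of `P`. -/
def IsRefinement {V : Type*} [Fintype V] [DecidableEq V] (Q P : Finset (Finset V)) : Prop :=
  ∀ J ∈ Q, ∃ I ∈ P, J ⊆ I

/-- `X` is a union of classes of `Q`: every class of `Q` is contained in `X` or disjoint
from `X`. -/
def IsUnionOfClasses {V : Type*} [Fintype V] [DecidableEq V] (Q : Finset (Finset V))
    (X : Finset V) : Prop :=
  ∀ K ∈ Q, K ⊆ X ∨ Disjoint K X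

/-- The edge density of the pair `(I, J)` in the graph `G`. -/
noncomputable def density {V : Type*} [Fintype V] [DecidableEq V] (G : SimpleGraph V)
    [DecidableRel G.Adj] (I J : Finset V) : ℝ :=
  (((I ×ˢ J).filter fun p => G.Adj p.1 p.2).card : ℝ) / (I.card * J.card)

/-- `M_{I,J}`: the matrix whose entries on `I × J` all equal the average of `M` over `I × J`
and which is `0` outside `I × J`. -/
noncomputable def proj {V : Type*} [Fintype V] [DecidableEq V] (M : Matrix V V ℝ)
    (I J : Finset V) : Matrix V V ℝ :=
  fun i j => if i ∈ I ∧ j ∈ J then (∑ x ∈ I, ∑ y ∈ J, M x y) / (I.card * J.card) else 0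

/-- `M_P = ∑_{I, J ∈ P} M_{I,J}`. -/
noncomputable def projPartition {V : Type*} [Fintype V] [DecidableEq V] (M : Matrix V V ℝ)
    (P : Finset (Finset V)) : Matrix V V ℝ :=
  ∑ I ∈ P, ∑ J ∈ P, proj M I J

/-- The Frobenius norm `‖M‖ = Tr(Mᵀ M)^{1/2}`. -/
noncomputable def frobNorm {V : Type*} [Fintype V] (M : Matrix V V ℝ) : ℝ :=
  Real.sqrt (Matrix.trace (M.transpose * M))

/-!
On `X × Y` the matrix `A_Q` has the same sum as `A`, because `X` and `Y` are unions of
`Q`-classes on each of which `A_Q` is the block average of `A`, while `A_P` is the constant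
`d(I, J)` there since `X × Y ⊆ I × J`. Hence `(A_Q - A_P)_{X,Y}` is the constant
`d(X, Y) - d(I, J)` on `X × Y`, and its squared norm is
`|X| |Y| (d(X, Y) - d(I, J))² > ε |I| · ε |J| · ε²`.
-/

noncomputable def blockAvg {V : Type*} (M : Matrix V V ℝ) (X Y : Finset V) : ℝ :=
  (∑ x ∈ X, ∑ y ∈ Y, M x y) / (X.card * Y.card)

section BlockAverages

variable {V : Type*}

theorem card_mul_card_mul_blockAvg (M : Matrix V V ℝ) (X Y : Finset V) :
    X.card * Y.card * blockAvg M X Y = ∑ x ∈ X, ∑ y ∈ Y, M x y := by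
  rcases X.eq_empty_or_nonempty with rfl | hX
  · simp
  rcases Y.eq_empty_or_nonempty with rfl | hY
  · simp
  exact mul_div_cancel₀ _ (by positivity)

theorem blockAvg_sub (M N : Matrix V V ℝ) (X Y : Finset V) :
    blockAvg (M - N) X Y = blockAvg M X Y - blockAvg N X Y := by
  simp only [blockAvg, Matrix.sub_apply, Finset.sum_sub_distrib, sub_div]

theorem blockAvg_eq_of_forall_eq {M : Matrix V V ℝ} {X Y : Finset V} {c : ℝ}
    (hX : X.Nonempty) (hY : Y.Nonempty) (h : ∀ x ∈ X, ∀ y ∈ Y, M x y = c) :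
    blockAvg M X Y = c := by
  have hsum : ∑ x ∈ X, ∑ y ∈ Y, M x y = X.card * Y.card * c := by
    simp [Finset.sum_congr rfl fun x hx => Finset.sum_congr rfl (h x hx), mul_assoc]
  rw [blockAvg, hsum, mul_div_cancel_left₀ _ (by positivity)]

theorem blockAvg_adjMatrix [Fintype V] [DecidableEq V] (G : SimpleGraph V) [DecidableRel G.Adj]
    (X Y : Finset V) : blockAvg (G.adjMatrix ℝ) X Y = density G X Y := by
  simp_rw [blockAvg, density, SimpleGraph.adjMatrix_apply, ← Finset.sum_product',
    Finset.sum_boole]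

theorem Matrix.trace_transpose_mul_self [Fintype V] (M : Matrix V V ℝ) :
    (M.transpose * M).trace = ∑ i, ∑ j, M i j ^ 2 := by
  simp only [Matrix.trace, Matrix.diag, Matrix.mul_apply, Matrix.transpose_apply, sq]
  exact Finset.sum_comm

theorem frobNorm_sq [Fintype V] (M : Matrix V V ℝ) : frobNorm M ^ 2 = ∑ i, ∑ j, M i j ^ 2 := by
  rw [frobNorm, Matrix.trace_transpose_mul_self, Real.sq_sqrt (by positivity)]

variable [Fintype V] [DecidableEq V]

theorem proj_apply (M : Matrix V V ℝ) (X Y : Finset V) (i j : V) :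
    proj M X Y i j = if i ∈ X ∧ j ∈ Y then blockAvg M X Y else 0 :=
  rfl

theorem frobNorm_proj_sq (M : Matrix V V ℝ) (X Y : Finset V) :
    frobNorm (proj M X Y) ^ 2 = X.card * Y.card * blockAvg M X Y ^ 2 := by
  simp only [frobNorm_sq, proj_apply, ite_pow, ite_and]
  simp [Finset.sum_ite_mem, mul_assoc]

end BlockAverages

section Partitions

variable {V : Type*} [Fintype V] [DecidableEq V]

theorem IsPartition.pairwiseDisjoint {P : Finset (Finset V)} (hP : IsPartition P) :
    (P : Set (Finset V)).PairwiseDisjoint id :=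
  fun I hI J hJ => hP.2.1 I hI J hJ

theorem IsPartition.exists_mem {P : Finset (Finset V)} (hP : IsPartition P) (x : V) :
    ∃ I ∈ P, x ∈ I := by
  simpa using (Finset.ext_iff.mp hP.2.2 x).mpr (Finset.mem_univ x)

theorem IsUnionOfClasses.biUnion_filter_subset {Q : Finset (Finset V)} {X : Finset V}
    (hX : IsUnionOfClasses Q X) (hQ : IsPartition Q) :
    {K ∈ Q | K ⊆ X}.biUnion id = X := by
  ext x
  simp only [Finset.mem_biUnion, Finset.mem_filter, id]
  refine ⟨fun ⟨K, ⟨_, hKX⟩, hxK⟩ => hKX hxK, fun hx => ?_⟩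
  obtain ⟨K, hK, hxK⟩ := hQ.exists_mem x
  exact ⟨K, ⟨hK, (hX K hK).resolve_right (Finset.not_disjoint_iff.mpr ⟨x, hxK, hx⟩)⟩, hxK⟩

theorem IsUnionOfClasses.sum_eq {β : Type*} [AddCommMonoid β] {Q : Finset (Finset V)}
    {X : Finset V} (hX : IsUnionOfClasses Q X) (hQ : IsPartition Q) (f : V → β) :
    ∑ x ∈ X, f x = ∑ K ∈ Q with K ⊆ X, ∑ x ∈ K, f x := by
  conv_lhs => rw [← hX.biUnion_filter_subset hQ]
  exact Finset.sum_biUnion (hQ.pairwiseDisjoint.subset (Finset.filter_subset _ Q))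

theorem IsUnionOfClasses.sum_sum_eq {β : Type*} [AddCommMonoid β] {Q : Finset (Finset V)}
    {X Y : Finset V} (hX : IsUnionOfClasses Q X) (hY : IsUnionOfClasses Q Y)
    (hQ : IsPartition Q) (f : V → V → β) :
    ∑ x ∈ X, ∑ y ∈ Y, f x y =
      ∑ K ∈ Q with K ⊆ X, ∑ L ∈ Q with L ⊆ Y, ∑ x ∈ K, ∑ y ∈ L, f x y := by
  rw [hX.sum_eq hQ]
  refine Finset.sum_congr rfl fun K _ => ?_
  simp_rw [hY.sum_eq hQ]
  exact Finset.sum_comm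

theorem projPartition_apply {P : Finset (Finset V)}
    (hP : (P : Set (Finset V)).PairwiseDisjoint id) {I J : Finset V} (hI : I ∈ P) (hJ : J ∈ P)
    {x y : V} (hx : x ∈ I) (hy : y ∈ J) (M : Matrix V V ℝ) :
    projPartition M P x y = blockAvg M I J := by
  have hx' : ∀ I' ∈ P, I' ≠ I → x ∉ I' := fun I' hI' hne =>
    Finset.disjoint_right.mp (hP hI' hI hne) hx
  have hy' : ∀ J' ∈ P, J' ≠ J → y ∉ J' := fun J' hJ' hne =>
    Finset.disjoint_right.mp (hP hJ' hJ hne) hy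
  simp only [projPartition, Matrix.sum_apply]
  rw [Finset.sum_eq_single_of_mem I hI fun I' hI' hne => Finset.sum_eq_zero fun J' _ => by
      simp [proj_apply, hx' I' hI' hne],
    Finset.sum_eq_single_of_mem J hJ fun J' hJ' hne => by simp [proj_apply, hy' J' hJ' hne]]
  simp [proj_apply, hx, hy]

theorem sum_sum_projPartition_of_mem {P : Finset (Finset V)}
    (hP : (P : Set (Finset V)).PairwiseDisjoint id) {K L : Finset V} (hK : K ∈ P) (hL : L ∈ P)
    (M : Matrix V V ℝ) :
    ∑ x ∈ K, ∑ y ∈ L, projPartition M P x y = ∑ x ∈ K, ∑ y ∈ L, M x y := by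
  rw [← card_mul_card_mul_blockAvg M K L,
    Finset.sum_congr rfl fun x hx => Finset.sum_congr rfl fun y hy =>
      projPartition_apply hP hK hL hx hy M]
  simp [mul_assoc]

theorem blockAvg_projPartition_of_isUnionOfClasses {Q : Finset (Finset V)} (hQ : IsPartition Q)
    {X Y : Finset V} (hX : IsUnionOfClasses Q X) (hY : IsUnionOfClasses Q Y)
    (M : Matrix V V ℝ) :
    blockAvg (projPartition M Q) X Y = blockAvg M X Y := by
  unfold blockAvg
  congr 1
  rw [hX.sum_sum_eq hY hQ (projPartition M Q), hX.sum_sum_eq hY hQ M]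
  exact Finset.sum_congr rfl fun K hK => Finset.sum_congr rfl fun L hL =>
    sum_sum_projPartition_of_mem hQ.pairwiseDisjoint
      (Finset.mem_filter.mp hK).1 (Finset.mem_filter.mp hL).1 M

theorem blockAvg_projPartition_of_subset {P : Finset (Finset V)}
    (hP : (P : Set (Finset V)).PairwiseDisjoint id) {I J : Finset V} (hI : I ∈ P) (hJ : J ∈ P)
    {X Y : Finset V} (hXI : X ⊆ I) (hYJ : Y ⊆ J) (hX : X.Nonempty) (hY : Y.Nonempty)
    (M : Matrix V V ℝ) :
    blockAvg (projPartition M P) X Y = blockAvg M I J :=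
  blockAvg_eq_of_forall_eq hX hY fun _ hx _ hy =>
    projPartition_apply hP hI hJ (hXI hx) (hYJ hy) M

end Partitions

theorem Finset.nonempty_of_mul_card_lt {α : Type*} {ε : ℝ} (hε : 0 ≤ ε) {s t : Finset α}
    (h : ε * t.card < s.card) : s.Nonempty :=
  Finset.card_pos.mp <| by exact_mod_cast (by positivity : 0 ≤ ε * t.card).trans_lt h

theorem pow_four_mul_mul_lt_mul_mul_sq {ε a b x y δ : ℝ} (hε : 0 < ε) (ha : 0 ≤ a)
    (hb : 0 ≤ b) (hx : ε * a < x) (hy : ε * b < y) (hδ : ε < |δ|) :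
    ε ^ 4 * a * b < x * y * δ ^ 2 := by
  have hxy : ε * a * (ε * b) < x * y := mul_lt_mul'' hx hy (by positivity) (by positivity)
  have hδ2 : ε ^ 2 < δ ^ 2 := by simpa using pow_lt_pow_left₀ hδ hε.le two_ne_zero
  calc ε ^ 4 * a * b = ε * a * (ε * b) * ε ^ 2 := by ring
    _ < x * y * δ ^ 2 :=
      mul_lt_mul'' hxy hδ2 (by positivity) (by positivity)

theorem energy_increment_on_witness_general {V : Type*} [Fintype V] [DecidableEq V]
    (ε : ℝ) (hε : 0 < ε) (G : SimpleGraph V) [DecidableRel G.Adj]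
    (A : Matrix V V ℝ) (hA : A = G.adjMatrix ℝ)
    (P : Finset (Finset V)) (hP : IsPartition P)
    (I J : Finset V) (hI : I ∈ P) (hJ : J ∈ P)
    (X Y : Finset V) (hXI : X ⊆ I) (hYJ : Y ⊆ J)
    (hX : (X.card : ℝ) > ε * I.card) (hY : (Y.card : ℝ) > ε * J.card)
    (hd : |density G X Y - density G I J| > ε)
    (Q : Finset (Finset V)) (hQ : IsPartition Q)
    (hXQ : IsUnionOfClasses Q X) (hYQ : IsUnionOfClasses Q Y) :
    frobNorm (proj (projPartition A Q - projPartition A P) X Y) ^ 2 >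
      ε ^ 4 * I.card * J.card := by
  have hXne : X.Nonempty := Finset.nonempty_of_mul_card_lt hε.le hX
  have hYne : Y.Nonempty := Finset.nonempty_of_mul_card_lt hε.le hY
  have hAvgQ : blockAvg (projPartition A Q) X Y = density G X Y := by
    rw [blockAvg_projPartition_of_isUnionOfClasses hQ hXQ hYQ, hA, blockAvg_adjMatrix]
  have hAvgP : blockAvg (projPartition A P) X Y = density G I J := by
    rw [blockAvg_projPartition_of_subset hP.pairwiseDisjoint hI hJ hXI hYJ hXne hYne, hA,
      blockAvg_adjMatrix]
  rw [gt_iff_lt, frobNorm_proj_sq, blockAvg_sub, hAvgQ, hAvgP]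
  exact pow_four_mul_mul_lt_mul_mul_sq hε (Nat.cast_nonneg _) (Nat.cast_nonneg _) hX hY hd

theorem energy_increment_on_witness {V : Type*} [Fintype V] [DecidableEq V]
    (ε : ℝ) (hε : 0 < ε) (G : SimpleGraph V) [DecidableRel G.Adj]
    (A : Matrix V V ℝ) (hA : A = G.adjMatrix ℝ)
    (P : Finset (Finset V)) (hP : IsPartition P)
    (I J : Finset V) (hI : I ∈ P) (hJ : J ∈ P)
    (X Y : Finset V) (hXI : X ⊆ I) (hYJ : Y ⊆ J)
    (hXne : X.Nonempty) (hYne : Y.Nonempty)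
    (hX : (X.card : ℝ) > ε * I.card) (hY : (Y.card : ℝ) > ε * J.card)
    (hd : |density G X Y - density G I J| > ε)
    (Q : Finset (Finset V)) (hQ : IsPartition Q) (hQP : IsRefinement Q P)
    (hXQ : IsUnionOfClasses Q X) (hYQ : IsUnionOfClasses Q Y) :
    frobNorm (proj (projPartition A Q - projPartition A P) X Y) ^ 2 >
      ε ^ 4 * I.card * J.card :=
  energy_increment_on_witness_general ε hε G A hA P hP I J hI hJ X Y hXI hYJ hX hY hd Q hQ hXQ hYQ
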